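/- Let p ≥ 1 be an integer, n = 2p+1, let q ∈ ℂ satisfy q^n = 1, and let a : ZMod n → ℂ. Let K be the diagonal matrix with K_{i,i} = q^i, let E₊ have (i,j) entry a(i) if j = i+2 and 0 otherwise, and let E₋ have (i,j) entry conj(a(j)) if i = j+2 and 0 otherwise (indices in ZMod n). Then K^n = 1 (the identity matrix), E₊^n = (∏_{i ∈ ZMod n} a(i)) · 1, and E₋^n = (∏_{i ∈ ZMod n} conj(a(i))) · 1. -/

import Mathlib

/-!
`E₊` is a weighted cyclic shift by `2`: its `k`-th power shifts by `2k` with weight the product of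
`a` along the orbit `i, i + 2, …, i + 2(k - 1)`. As `2` is a unit in `ZMod (2p+1)`, the orbit of
length `n` runs once through `ZMod n` and returns to `i`. `E₋` is the transpose of the weighted
shift with weights `conj ∘ a`, and `K` is diagonal with `n`-th roots of unity on the diagonal.
-/

open Matrix Finset

section WeightedShift

variable {G R : Type*} [AddCommGroup G] [DecidableEq G]

def weightedShift [Zero R] (c : G) (f : G → R) : Matrix G G R :=
  of fun i j => if j = i + c then f i else 0

theorem weightedShift_apply [Zero R] (c : G) (f : G → R) (i j : G) :
    weightedShift c f i j = if j = i + c then f i else 0 := rfl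

variable [Fintype G] [CommSemiring R]

theorem weightedShift_pow_apply (c : G) (f : G → R) (k : ℕ) (i j : G) :
    (weightedShift c f ^ k) i j =
      if j = i + k • c then ∏ t ∈ range k, f (i + t • c) else 0 := by
  induction k generalizing j with
  | zero => simp [one_apply, eq_comm]
  | succ k ih =>
    rw [pow_succ, mul_apply, sum_eq_single (i + k • c)]
    · rw [ih, if_pos rfl, weightedShift_apply, mul_ite, mul_zero, succ_nsmul, ← add_assoc,
        prod_range_succ]
    · intro x _ hx
      rw [ih, if_neg hx, zero_mul]
    · exact fun h => absurd (mem_univ _) h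

end WeightedShift

theorem ZMod.prod_range_natCast {M : Type*} [CommMonoid M] (n : ℕ) [NeZero n] (f : ZMod n → M) :
    ∏ t ∈ range n, f t = ∏ x, f x :=
  prod_bij' (fun t _ => t) (fun x _ => x.val) (fun _ _ => mem_univ _)
    (fun x _ => mem_range.2 x.val_lt) (fun _ ht => ZMod.val_cast_of_lt (mem_range.1 ht))
    (fun x _ => ZMod.natCast_zmod_val x) (fun _ _ => rfl)

theorem weightedShift_pow_of_isUnit {R : Type*} [CommSemiring R] {n : ℕ} [NeZero n] {c : ZMod n}
    (hc : IsUnit c) (f : ZMod n → R) :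
    weightedShift c f ^ n = (∏ x, f x) • 1 := by
  have orbit (i : ZMod n) : ∏ t ∈ range n, f (i + t • c) = ∏ x, f x := by
    obtain ⟨u, rfl⟩ := hc
    simp only [nsmul_eq_mul]
    rw [ZMod.prod_range_natCast n (fun t => f (i + t * u))]
    exact Equiv.prod_comp ((Units.mulRight u).trans (Equiv.addLeft i)) f
  ext i j
  rw [weightedShift_pow_apply, orbit, nsmul_eq_mul, ZMod.natCast_self, zero_mul, add_zero,
    Matrix.smul_apply, one_apply, smul_eq_mul, mul_ite, mul_one, mul_zero]
  exact if_congr eq_comm rfl rfl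

theorem stmt_15_general (p : ℕ) (q : ℂ) (hq : q ^ (2 * p + 1) = 1)
    (a : ZMod (2 * p + 1) → ℂ)
    (K Eplus Eminus : Matrix (ZMod (2 * p + 1)) (ZMod (2 * p + 1)) ℂ)
    (hK : K = Matrix.diagonal fun i => q ^ i.val)
    (hEplus : Eplus = Matrix.of fun i j => if j = i + 2 then a i else 0)
    (hEminus : Eminus = Matrix.of fun i j => if i = j + 2 then star (a j) else 0) :
    K ^ (2 * p + 1) = 1 ∧
      Eplus ^ (2 * p + 1) = (∏ i : ZMod (2 * p + 1), a i) • (1 : Matrix _ _ ℂ) ∧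
      Eminus ^ (2 * p + 1) = (∏ i : ZMod (2 * p + 1), star (a i)) • (1 : Matrix _ _ ℂ) := by
  have two_isUnit : IsUnit (2 : ZMod (2 * p + 1)) := by
    exact_mod_cast (ZMod.isUnit_iff_coprime 2 (2 * p + 1)).2 (by simp)
  have hEminus_transpose : Eminus = (weightedShift 2 fun i => star (a i))ᵀ := hEminus
  refine ⟨?_, hEplus ▸ weightedShift_pow_of_isUnit two_isUnit a, ?_⟩
  · rw [hK, diagonal_pow, ← diagonal_one]
    congr with i
    rw [Pi.pow_apply, ← pow_mul, mul_comm, pow_mul, hq, one_pow]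
  · rw [hEminus_transpose, ← transpose_pow, weightedShift_pow_of_isUnit two_isUnit, transpose_smul,
      transpose_one]

theorem stmt_15 (p : ℕ) (hp : 1 ≤ p) (q : ℂ) (hq : q ^ (2 * p + 1) = 1)
    (a : ZMod (2 * p + 1) → ℂ)
    (K Eplus Eminus : Matrix (ZMod (2 * p + 1)) (ZMod (2 * p + 1)) ℂ)
    (hK : K = Matrix.diagonal fun i => q ^ i.val)
    (hEplus : Eplus = Matrix.of fun i j => if j = i + 2 then a i else 0)
    (hEminus : Eminus = Matrix.of fun i j => if i = j + 2 then star (a j) else 0) :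
    K ^ (2 * p + 1) = 1 ∧
      Eplus ^ (2 * p + 1) = (∏ i : ZMod (2 * p + 1), a i) • (1 : Matrix _ _ ℂ) ∧
      Eminus ^ (2 * p + 1) = (∏ i : ZMod (2 * p + 1), star (a i)) • (1 : Matrix _ _ ℂ) :=
  stmt_15_general p q hq a K Eplus Eminus hK hEplus hEminus
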